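/- A normed space X is complete (a Banach space) if and only if its closed unit ball is cs-compact, i.e., for every sequence {a_n} in the closed unit ball and nonnegative reals {λ_n} with Σλ_n = 1, the series Σλ_n a_n converges to a point of the closed unit ball. -/

import Mathlib

/-!
In a Banach space the series `∑ lₙ • aₙ` converges absolutely, with norm at most `∑ lₙ = 1`.
Conversely, an absolutely convergent series `∑ uₙ` is dominated termwise by a positive summable
sequence `eₙ` (say `‖uₙ‖ + 2⁻ⁿ`) with sum `C`, and `uₙ = C • ((eₙ / C) • (eₙ⁻¹ • uₙ))` exhibits
`∑ uₙ` as `C` times a convex series of points of the unit ball, so it converges.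
-/

open Metric

section

variable {X : Type*} [NormedAddCommGroup X] [NormedSpace ℝ X]

def IsCSCompact (A : Set X) : Prop :=
  ∀ (a : ℕ → X) (l : ℕ → ℝ), (∀ n, a n ∈ A) → (∀ n, 0 ≤ l n) → HasSum l 1 →
    ∃ x ∈ A, HasSum (fun n => l n • a n) x

theorem isCSCompact_closedBall [CompleteSpace X] (r : ℝ) :
    IsCSCompact (closedBall (0 : X) r) := by
  intro a l ha hl hl1
  have hbound : ∀ n, ‖l n • a n‖ ≤ l n * r := fun n => by
    rw [norm_smul, Real.norm_of_nonneg (hl n)]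
    exact mul_le_mul_of_nonneg_left (mem_closedBall_zero_iff.1 (ha n)) (hl n)
  have hsum := (Summable.of_norm_bounded (hl1.mul_right r).summable hbound).hasSum
  refine ⟨_, mem_closedBall_zero_iff.2 ?_, hsum⟩
  simpa using hsum.norm_le_of_bounded (hl1.mul_right r) hbound

theorem exists_hasSum_of_isCSCompact_closedBall (h : IsCSCompact (closedBall (0 : X) 1))
    {u : ℕ → X} {e : ℕ → ℝ} (he : ∀ n, 0 < e n) (he_sum : Summable e)
    (hu : ∀ n, ‖u n‖ ≤ e n) : ∃ s, HasSum u s := by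
  obtain ⟨C, hC_sum⟩ := he_sum
  have hC : 0 < C := hC_sum.tsum_eq ▸ hC_sum.summable.tsum_pos (fun n => (he n).le) 0 (he 0)
  have hl1 : HasSum (fun n => e n / C) 1 := div_self hC.ne' ▸ hC_sum.div_const C
  have ha : ∀ n, (e n)⁻¹ • u n ∈ closedBall (0 : X) 1 := fun n => by
    rw [mem_closedBall_zero_iff, norm_smul, norm_inv, Real.norm_of_nonneg (he n).le]
    exact inv_mul_le_one_of_le₀ (hu n) (he n).le
  obtain ⟨x, -, hx⟩ := h _ _ ha (fun n => div_nonneg (he n).le hC.le) hl1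
  refine ⟨C • x, ?_⟩
  convert hx.const_smul C using 2 with n
  rw [smul_smul, smul_smul, mul_div_cancel₀ _ hC.ne', mul_inv_cancel₀ (he n).ne', one_smul]

theorem completeSpace_of_isCSCompact_closedBall (h : IsCSCompact (closedBall (0 : X) 1)) :
    CompleteSpace X := by
  refine NormedAddCommGroup.completeSpace_of_summable_imp_tendsto fun u hu => ?_
  obtain ⟨s, hs⟩ := exists_hasSum_of_isCSCompact_closedBall h
    (e := fun n => ‖u n‖ + (1 / 2) ^ n) (fun n => by positivity)
    (hu.add summable_geometric_two) (fun n => le_add_of_nonneg_right (by positivity))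
  exact ⟨s, hs.tendsto_sum_nat⟩

end

theorem completeSpace_iff_closedBall_csCompact
    {X : Type*} [NormedAddCommGroup X] [NormedSpace ℝ X] :
    CompleteSpace X ↔
      ∀ (a : ℕ → X) (l : ℕ → ℝ), (∀ n, a n ∈ Metric.closedBall (0 : X) 1) →
        (∀ n, 0 ≤ l n) → HasSum l 1 →
        ∃ x ∈ Metric.closedBall (0 : X) 1, HasSum (fun n => l n • a n) x :=
  ⟨fun _ => isCSCompact_closedBall 1, completeSpace_of_isCSCompact_closedBall⟩
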